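/- arXiv:0805.4548 — 4 statements merged into one kernel-verified Lean document; each statement's English description precedes it below -/
import Mathlib

section
/- If F is a long-tailed distribution on the positive half-line, then there exists an increasing concave function h with h(x) < x/2 for all large x, h(x) → ∞ as x → ∞, and F̄(x - h(x)) ~ F̄(x) as x → ∞. -/
/-!
Long-tailedness gives `F̄(x - n) / F̄(x) → 1` for every fixed `n : ℕ`, and a diagonal argument
produces one `N(x) → ∞` with `F̄(x - N(x)) / F̄(x) → 1`. Every function tending to infinity
eventually dominates a monotone concave function tending to infinity, namely the piecewise linear
function through points `(b k, k)` whose abscissae have nondecreasing gaps and lie beyond the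
point where the given function exceeds `k + 1`. Taking this minorant `h` of `min (N x) (x / 3)`,
monotonicity of `F̄` squeezes `F̄(x - h(x)) / F̄(x)` between `1` and `F̄(x - N(x)) / F̄(x)`.
-/

open Filter Set Topology

theorem exists_tendsto_diag_of_forall_tendsto {α : Type*} [PseudoMetricSpace α]
    {u : ℕ → ℝ → α} {c : α} (hu : ∀ n, Tendsto (u n) atTop (𝓝 c)) :
    ∃ N : ℝ → ℕ, Tendsto N atTop atTop ∧ Tendsto (fun x => u (N x) x) atTop (𝓝 c) := by
  choose T hT using fun n : ℕ =>
    eventually_atTop.1 <|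
      (hu n).eventually (Metric.ball_mem_nhds c (Nat.one_div_pos_of_nat (n := n)))
  classical
  set N : ℝ → ℕ := fun x => Nat.findGreatest (fun n => T n ≤ x) ⌊x⌋₊
  have le_N : ∀ n : ℕ, ∀ x ≥ max (T n) n, n ≤ N x := fun n x hx =>
    Nat.le_findGreatest (Nat.le_floor (le_of_max_le_right hx)) (le_of_max_le_left hx)
  have hN : Tendsto N atTop atTop := tendsto_atTop_atTop.2 fun n => ⟨_, le_N n⟩
  refine ⟨N, hN, tendsto_iff_dist_tendsto_zero.2 <|
    squeeze_zero' (.of_forall fun _ => dist_nonneg) ?_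
      (tendsto_one_div_add_atTop_nhds_zero_nat.comp hN)⟩
  filter_upwards [eventually_ge_atTop (T 0)] with x hx
  exact (hT _ x (Nat.findGreatest_spec (P := fun n => T n ≤ x) (Nat.zero_le _) hx)).le

theorem tendsto_div_sub_natCast {f : ℝ → ℝ} (hf : ∀ x, f x ≠ 0)
    (hlong : Tendsto (fun x => f (x - 1) / f x) atTop (𝓝 1)) (n : ℕ) :
    Tendsto (fun x => f (x - n) / f x) atTop (𝓝 1) := by
  induction n with
  | zero => simp [div_self (hf _)]
  | succ n ih =>
    have hstep := (hlong.comp (tendsto_atTop_add_const_right _ (-(n : ℝ)) tendsto_id)).mul ih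
    rw [one_mul] at hstep
    refine hstep.congr fun x => ?_
    simp only [Function.comp_apply, id, ← sub_eq_add_neg, Nat.cast_succ, ← sub_sub]
    rw [div_mul_div_cancel₀ (hf _)]

theorem exists_monotone_gaps_ge (a : ℕ → ℝ) :
    ∃ b : ℕ → ℝ, Monotone (fun k => b (k + 1) - b k) ∧ b 0 < b 1 ∧ a ≤ b := by
  set d := partialSups fun i => max (a i) 1
  have le_d : ∀ k, max (a k) 1 ≤ d k := le_partialSups fun i => max (a i) 1
  have one_le_d : ∀ k, 1 ≤ d k := fun k => (le_max_right _ _).trans (le_d k)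
  refine ⟨fun k => ∑ j ∈ Finset.range (k + 1), d j, ?_, ?_, fun k => ?_⟩
  · intro i j hij
    simpa [Finset.sum_range_succ] using d.monotone (Nat.succ_le_succ hij)
  · simpa [Finset.sum_range_succ] using zero_lt_one.trans_le (one_le_d 1)
  · calc a k ≤ d k := (le_max_left _ _).trans (le_d k)
      _ ≤ ∑ j ∈ Finset.range (k + 1), d j :=
        Finset.single_le_sum (fun j _ => zero_le_one.trans (one_le_d j))
          (Finset.self_mem_range_succ k)

noncomputable def chord (b : ℕ → ℝ) (k : ℕ) (x : ℝ) : ℝ :=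
  k + (x - b k) / (b (k + 1) - b k)

/-- For `b` with positive nondecreasing gaps, this is the piecewise linear function taking the
value `k` at `b k`: the chords have nonincreasing slopes. -/
noncomputable def chordInf (b : ℕ → ℝ) (x : ℝ) : ℝ := ⨅ k, chord b k x

section Chord

variable {b : ℕ → ℝ}

theorem sub_mul_gap_le_sub (hgap : Monotone fun k => b (k + 1) - b k) (n k : ℕ) :
    ((n : ℝ) - k) * (b (k + 1) - b k) ≤ b n - b k := by
  rcases le_total k n with hkn | hnk
  · induction n, hkn using Nat.le_induction with
    | base => simp
    | succ n hkn ih =>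
      have := hgap hkn
      push_cast
      linarith
  · induction k, hnk using Nat.le_induction with
    | base => simp
    | succ k hnk ih =>
      have hk : (0 : ℝ) ≤ k + 1 - n := by
        have : (n : ℝ) ≤ k := by exact_mod_cast hnk
        linarith
      have := mul_le_mul_of_nonneg_left (hgap (Nat.le_succ k)) hk
      push_cast at this ⊢
      linarith

variable (hgap : Monotone fun k => b (k + 1) - b k) (h01 : b 0 < b 1)
include hgap h01

theorem sub_pos_of_monotone_gaps (k : ℕ) : 0 < b (k + 1) - b k :=
  (sub_pos.2 h01).trans_le (hgap (Nat.zero_le k))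

theorem natCast_le_chord {n : ℕ} {x : ℝ} (hx : b n ≤ x) (k : ℕ) :
    (n : ℝ) ≤ chord b k x := by
  have := sub_mul_gap_le_sub hgap n k
  rw [chord, ← sub_le_iff_le_add', le_div_iff₀ (sub_pos_of_monotone_gaps hgap h01 k)]
  linarith

theorem chord_bddBelow (x : ℝ) : BddBelow (range fun k => chord b k x) := by
  refine ⟨-|x - b 0| / (b 1 - b 0), ?_⟩
  rintro _ ⟨k, rfl⟩
  have hk := sub_pos_of_monotone_gaps hgap h01 k
  calc -|x - b 0| / (b 1 - b 0) ≤ -|x - b 0| / (b (k + 1) - b k) := by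
        rw [neg_div, neg_div, neg_le_neg_iff]
        exact div_le_div_of_nonneg_left (abs_nonneg _) (sub_pos_of_monotone_gaps hgap h01 0)
          (hgap (Nat.zero_le k))
    _ ≤ (x - b 0) / (b (k + 1) - b k) := div_le_div_of_nonneg_right (neg_abs_le _) hk.le
    _ ≤ chord b k (b 0) + (x - b 0) / (b (k + 1) - b k) := by
      simpa using natCast_le_chord hgap h01 (n := 0) le_rfl k
    _ = chord b k x := by
      simp only [chord]
      ring

theorem chordInf_le (k : ℕ) (x : ℝ) : chordInf b x ≤ chord b k x :=
  ciInf_le (chord_bddBelow hgap h01 x) k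

theorem natCast_le_chordInf {n : ℕ} {x : ℝ} (hx : b n ≤ x) : (n : ℝ) ≤ chordInf b x :=
  le_ciInf (natCast_le_chord hgap h01 hx)

theorem chordInf_le_add_one {m : ℕ} {x : ℝ} (hx : x ≤ b (m + 1)) :
    chordInf b x ≤ m + 1 := by
  refine (chordInf_le hgap h01 m x).trans ?_
  rw [chord, add_le_add_iff_left, div_le_one (sub_pos_of_monotone_gaps hgap h01 m)]
  linarith

theorem chordInf_monotone : Monotone (chordInf b) := fun x y hxy =>
  ciInf_mono (chord_bddBelow hgap h01 x) fun k => by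
    unfold chord
    gcongr
    exact (sub_pos_of_monotone_gaps hgap h01 k).le

theorem chordInf_concaveOn : ConcaveOn ℝ univ (chordInf b) := by
  refine ⟨convex_univ, fun x _ y _ s t hs ht hst => le_ciInf fun k => ?_⟩
  have affine : chord b k (s • x + t • y) = s * chord b k x + t * chord b k y := by
    obtain rfl : t = 1 - s := by linarith
    simp only [chord, smul_eq_mul]
    field_simp
    ring
  rw [smul_eq_mul, smul_eq_mul, affine]
  gcongr <;> exact chordInf_le hgap h01 k _

theorem tendsto_chordInf_atTop : Tendsto (chordInf b) atTop atTop :=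
  tendsto_atTop_atTop.2 fun C =>
    ⟨b ⌈C⌉₊, fun _ hx => (Nat.le_ceil C).trans (natCast_le_chordInf hgap h01 hx)⟩

theorem not_bddAbove_range_of_monotone_gaps : ¬BddAbove (range b) := by
  rintro ⟨M, hM⟩
  obtain ⟨n, hn⟩ := exists_nat_gt ((M - b 0) / (b 1 - b 0))
  have := sub_mul_gap_le_sub hgap n 0
  rw [div_lt_iff₀ (sub_pos.2 h01)] at hn
  simp only [CharP.cast_eq_zero, sub_zero, zero_add] at this
  linarith [hM ⟨n, rfl⟩]

theorem exists_mem_Ico_of_monotone_gaps {x : ℝ} (hx : b 0 ≤ x) :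
    ∃ m, x ∈ Ico (b m) (b (m + 1)) := by
  have hmono : Monotone b :=
    monotone_nat_of_le_succ fun k => (sub_pos.1 (sub_pos_of_monotone_gaps hgap h01 k)).le
  have hcover := iUnion_Ico_map_succ_eq_Ici (fun k => hmono (Nat.zero_le k))
    (not_bddAbove_range_of_monotone_gaps hgap h01)
  have hx' : x ∈ Ici (b ⊥) := hx
  rw [← hcover, mem_iUnion] at hx'
  simpa using hx'

end Chord

theorem exists_monotone_concaveOn_le_of_tendsto_atTop {φ : ℝ → ℝ}
    (hφ : Tendsto φ atTop atTop) :
    ∃ h : ℝ → ℝ, Monotone h ∧ ConcaveOn ℝ univ h ∧ Tendsto h atTop atTop ∧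
      h ≤ᶠ[atTop] φ := by
  choose a ha using fun k : ℕ => eventually_atTop.1 (hφ.eventually_ge_atTop ((k : ℝ) + 1))
  obtain ⟨b, hgap, h01, hab⟩ := exists_monotone_gaps_ge a
  refine ⟨chordInf b, chordInf_monotone hgap h01, chordInf_concaveOn hgap h01,
    tendsto_chordInf_atTop hgap h01, ?_⟩
  filter_upwards [eventually_ge_atTop (b 0)] with x hx
  obtain ⟨m, hbm, hbm'⟩ := exists_mem_Ico_of_monotone_gaps hgap h01 hx
  exact (chordInf_le_add_one hgap h01 hbm'.le).trans (ha m x ((hab m).trans hbm))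

/-- If F is long-tailed, there is an increasing concave function h with h(x) < x/2
for large x, h(x) → ∞, and F̄(x - h(x)) ~ F̄(x). -/
theorem longTailed_exists_h (Fbar : ℝ → ℝ)
    (hpos : ∀ x, 0 < Fbar x) (hanti : Antitone Fbar)
    (hlong : Tendsto (fun x => Fbar (x - 1) / Fbar x) atTop (nhds 1)) :
    ∃ h : ℝ → ℝ, Monotone h ∧ ConcaveOn ℝ Set.univ h ∧
      (∀ᶠ x in atTop, h x < x / 2) ∧
      Tendsto h atTop atTop ∧
      Tendsto (fun x => Fbar (x - h x) / Fbar x) atTop (nhds 1) := by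
  obtain ⟨N, hN, hratio⟩ :=
    exists_tendsto_diag_of_forall_tendsto (tendsto_div_sub_natCast (fun x => (hpos x).ne') hlong)
  obtain ⟨h, hmono, hconc, htop, hle⟩ := exists_monotone_concaveOn_le_of_tendsto_atTop
    (tendsto_inf_atTop _ (tendsto_natCast_atTop_atTop.comp hN)
      (tendsto_id.atTop_div_const (by norm_num : (0 : ℝ) < 3)))
  have hbounds : ∀ᶠ x in atTop, 0 ≤ h x ∧ h x ≤ N x ∧ h x ≤ x / 3 := by
    filter_upwards [htop.eventually_ge_atTop 0, hle] with x h0 hx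
    exact ⟨h0, hx.trans inf_le_left, hx.trans inf_le_right⟩
  refine ⟨h, hmono, hconc, ?_, htop, ?_⟩
  · filter_upwards [hbounds, eventually_gt_atTop 0] with x hx hx0
    linarith [hx.2.2]
  · refine tendsto_of_tendsto_of_tendsto_of_le_of_le' tendsto_const_nhds hratio ?_ ?_
    · filter_upwards [hbounds] with x hx
      exact (one_le_div (hpos x)).2 (hanti (by linarith [hx.1]))
    · filter_upwards [hbounds] with x hx
      exact div_le_div_of_nonneg_right (hanti (by linarith [hx.2.1])) (hpos x).le
end

section
/- If F is subexponential and g(x) → ∞ with g(x) ≤ x, then ∫_{g(x)}^{x} F̄(x-y)/F̄(x) dF(y) → 0 as x → ∞. -/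
/-!
Write `F̄(μ ∗ μ)(x) = ∫ F̄(x - y) dμ(y)` and split the integral at `g x` and `x`. For `0 ≤ y ≤ g x`
the integrand is at least `F̄(x)`, so that part is at least `F̄(x) (1 - F̄(g x))`; for `y > x` the
integrand is `1` because `μ` lives on `[0, ∞)`, so that part is `F̄(x)`. Hence the normalised
integral over `(g x, x]` is at most `F̄(μ ∗ μ)(x) / F̄(x) - 2 + F̄(g x)`, which tends to `0`.
-/

open Filter MeasureTheory Set ProbabilityTheory
open scoped Topology

noncomputable def tail (μ : Measure ℝ) (x : ℝ) : ℝ := (μ (Set.Ioi x)).toReal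

noncomputable def convn (μ : Measure ℝ) : ℕ → Measure ℝ
  | 0 => Measure.dirac 0
  | n + 1 => ((convn μ n).prod μ).map (fun p : ℝ × ℝ => p.1 + p.2)

section Tail

variable (μ : Measure ℝ)

lemma tail_nonneg (x : ℝ) : 0 ≤ tail μ x := measureReal_nonneg

lemma tail_antitone [IsFiniteMeasure μ] : Antitone (tail μ) :=
  fun _ _ h => measureReal_mono (Ioi_subset_Ioi h)

lemma tail_le_one [IsProbabilityMeasure μ] (x : ℝ) : tail μ x ≤ 1 := measureReal_le_one

lemma tail_eq_one_sub_measureReal_Iic [IsProbabilityMeasure μ] (x : ℝ) :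
    tail μ x = 1 - μ.real (Iic x) := by
  rw [← probReal_compl_eq_one_sub measurableSet_Iic, compl_Iic]
  rfl

lemma tendsto_tail_atTop [IsProbabilityMeasure μ] : Tendsto (tail μ) atTop (𝓝 0) := by
  have h := (tendsto_cdf_atTop μ).const_sub 1
  simp_rw [cdf_eq_real, sub_self] at h
  convert h using 1
  exact funext (tail_eq_one_sub_measureReal_Iic μ)

lemma tail_eq_one_of_neg [IsProbabilityMeasure μ] (hsupp : μ (Iio 0) = 0) {z : ℝ} (hz : z < 0) :
    tail μ z = 1 := by
  have h0 : μ (Iic z) = 0 := measure_mono_null (Iic_subset_Iio.2 hz) hsupp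
  rw [tail_eq_one_sub_measureReal_Iic, measureReal_def, h0, ENNReal.toReal_zero, sub_zero]

lemma integrable_tail_sub [IsProbabilityMeasure μ] (x : ℝ) :
    Integrable (fun y => tail μ (x - y)) μ := by
  refine Integrable.of_bound (C := 1) ?_ (ae_of_all _ fun y => ?_)
  · exact ((tail_antitone μ).measurable.comp (measurable_const.sub measurable_id))
      |>.aestronglyMeasurable
  · rw [Real.norm_of_nonneg (tail_nonneg μ _)]
    exact tail_le_one μ _

end Tail

lemma convn_two (μ : Measure ℝ) [SFinite μ] : convn μ 2 = μ ∗ μ := by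
  change (Measure.dirac 0 ∗ μ) ∗ μ = μ ∗ μ
  rw [Measure.dirac_zero_conv]

lemma tail_conv (μ ν : Measure ℝ) [IsFiniteMeasure ν] (x : ℝ) :
    tail (μ ∗ ν) x = ∫ y, tail ν (x - y) ∂μ := by
  have hadd : Measurable fun p : ℝ × ℝ => p.1 + p.2 := by fun_prop
  have hpre : ∀ a : ℝ, Prod.mk a ⁻¹' ((fun p : ℝ × ℝ => p.1 + p.2) ⁻¹' Ioi x) = Ioi (x - a) := by
    intro a
    ext b
    simp [sub_lt_iff_lt_add']
  have hmono : Monotone fun y : ℝ => ν (Ioi (x - y)) :=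
    fun a b hab => measure_mono (Ioi_subset_Ioi (by linarith))
  rw [tail, Measure.conv, Measure.map_apply hadd measurableSet_Ioi,
    Measure.prod_apply (hadd measurableSet_Ioi)]
  simp only [hpre]
  rw [← integral_toReal hmono.measurable.aemeasurable (ae_of_all _ fun _ => measure_lt_top ν _)]
  rfl

lemma setIntegral_Ioc_tail_sub_le (μ : Measure ℝ) [IsProbabilityMeasure μ]
    (hsupp : μ (Iio 0) = 0) {a x : ℝ} (hax : a ≤ x) :
    ∫ y in Ioc a x, tail μ (x - y) ∂μ ≤ tail (μ ∗ μ) x - tail μ x * (2 - tail μ a) := by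
  set f := fun y => tail μ (x - y)
  have hf := integrable_tail_sub μ x
  have hsplit : ∫ y, f y ∂μ
      = ∫ y in Iic a, f y ∂μ + ∫ y in Ioc a x, f y ∂μ + ∫ y in Ioi x, f y ∂μ := by
    rw [← integral_add_compl measurableSet_Iic hf, compl_Iic, ← Iic_union_Ioc_eq_Iic hax,
      setIntegral_union (Iic_disjoint_Ioc le_rfl) measurableSet_Ioc hf.integrableOn
      hf.integrableOn]
  have hnonneg : ∀ᵐ y ∂μ, 0 ≤ y := by
    rw [ae_iff]
    simpa only [not_le, ← Iio_def] using hsupp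
  have hlow : tail μ x * (1 - tail μ a) ≤ ∫ y in Iic a, f y ∂μ := by
    calc tail μ x * (1 - tail μ a) = ∫ _ in Iic a, tail μ x ∂μ := by
          rw [setIntegral_const, smul_eq_mul, tail_eq_one_sub_measureReal_Iic μ a]
          ring
      _ ≤ ∫ y in Iic a, f y ∂μ :=
          setIntegral_mono_on_ae (integrable_const _).integrableOn hf.integrableOn
            measurableSet_Iic (hnonneg.mono fun y hy _ => tail_antitone μ (by linarith))
  have htop : ∫ y in Ioi x, f y ∂μ = tail μ x := by
    rw [setIntegral_congr_fun measurableSet_Ioi fun y hy =>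
      tail_eq_one_of_neg μ hsupp (sub_neg.2 (mem_Ioi.1 hy)), setIntegral_const, smul_eq_mul,
      mul_one]
    rfl
  rw [tail_conv, hsplit, htop]
  linarith

/-- If F is subexponential and g(x) → ∞ with g(x) ≤ x, then
∫_{g(x)}^{x} F̄(x-y)/F̄(x) dF(y) → 0 as x → ∞. -/
theorem subexp_integral_tendsto_zero (μ : Measure ℝ) [IsProbabilityMeasure μ]
    (hsupp : μ (Set.Iio 0) = 0) (hunb : ∀ x, 0 < μ (Set.Ioi x))
    (hsub : Tendsto (fun x => tail (convn μ 2) x / tail μ x) atTop (nhds 2))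
    (g : ℝ → ℝ) (hg : Tendsto g atTop atTop) (hgx : ∀ x, g x ≤ x) :
    Tendsto (fun x => ∫ y in Set.Ioc (g x) x, tail μ (x - y) / tail μ x ∂μ)
      atTop (nhds 0) := by
  have htail_pos : ∀ x, 0 < tail μ x := fun x =>
    ENNReal.toReal_pos (hunb x).ne' (measure_ne_top μ _)
  have hupper : Tendsto (fun x => tail (convn μ 2) x / tail μ x - 2 + tail μ (g x)) atTop (𝓝 0) := by
    simpa using (hsub.sub_const 2).add ((tendsto_tail_atTop μ).comp hg)
  refine tendsto_of_tendsto_of_tendsto_of_le_of_le tendsto_const_nhds hupper (fun x => ?_)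
    (fun x => ?_)
  · exact setIntegral_nonneg measurableSet_Ioc fun y _ =>
      div_nonneg (tail_nonneg μ _) (tail_nonneg μ _)
  · calc ∫ y in Ioc (g x) x, tail μ (x - y) / tail μ x ∂μ
        = (∫ y in Ioc (g x) x, tail μ (x - y) ∂μ) / tail μ x := integral_div _ _
      _ ≤ (tail (convn μ 2) x - tail μ x * (2 - tail μ (g x))) / tail μ x := by
          rw [convn_two]
          exact div_le_div_of_nonneg_right (setIntegral_Ioc_tail_sub_le μ hsupp (hgx x))
            (htail_pos x).le
      _ = tail (convn μ 2) x / tail μ x - 2 + tail μ (g x) := by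
          field_simp [(htail_pos x).ne']
          ring
end

section
/- With the notation J = J(x,h(x)), K = K(x,h(x)), the relative error Δ(x) of the asymptotic approximation satisfies Δ(x) ≤ (1-p)[Δ(x-h(x))(K+1)F(h(x)) + Δ[h(x), x-h(x)] J] + (1-p)J + (1-p²)K - (1-p)(K+1)F̄(h(x)). -/
open Filter MeasureTheory ProbabilityTheory Set

/-- Relative error of the asymptotic approximation for the geometric sum. -/
noncomputable def Delta {Ω : Type*} [MeasureSpace Ω] (S : Ω → ℝ) (p : ℝ)
    (μ : Measure ℝ) (y : ℝ) : ℝ :=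
  (ℙ {ω | y < S ω}).toReal / ((1 / p) * tail μ y) - 1

noncomputable def DeltaSup {Ω : Type*} [MeasureSpace Ω] (S : Ω → ℝ) (p : ℝ)
    (μ : Measure ℝ) (a b : ℝ) : ℝ :=
  sSup (Delta S p μ '' Set.Icc a b)

open scoped ENNReal

/-!
Expanding `ℙ(S_ν > x)` over the value of `ν` and peeling off one summand gives the renewal
equation `ℙ(S_ν > x) = p F̄(x) + (1 - p) ∫ ℙ(S_ν > x - y) dF(y)`. Split the integral at `h x` and
`x - h x`: for `y ≤ h x` bound `ℙ(S_ν > x - y)` by `ℙ(S_ν > x - h x)`, on `(h x, x - h x]` by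
`(1 + Δ[h x, x - h x]) F̄(x - y) / p`, and for `y > x - h x` by `1`. Dividing by `F̄(x) / p` and
writing `F(h x) = 1 - F̄(h x)` gives the bound.
-/

section RandomSums

variable {Ω : Type*} [MeasurableSpace Ω] {P : Measure Ω}

theorem measure_lt_add_eq_lintegral [IsFiniteMeasure P] {X Y : Ω → ℝ}
    (hX : Measurable X) (hY : Measurable Y) (hXY : IndepFun X Y P) (z : ℝ) :
    P {ω | z < X ω + Y ω} = ∫⁻ y, P {ω | z - y < Y ω} ∂(P.map X) := by
  have hset : MeasurableSet {q : ℝ × ℝ | z < q.1 + q.2} :=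
    measurableSet_lt measurable_const (measurable_fst.add measurable_snd)
  calc P {ω | z < X ω + Y ω} = P.map (fun ω => (X ω, Y ω)) {q | z < q.1 + q.2} := by
        rw [Measure.map_apply (hX.prodMk hY) hset]; rfl
    _ = ∫⁻ y, P.map Y (Ioi (z - y)) ∂(P.map X) := by
        rw [(indepFun_iff_map_prod_eq_prod_map_map hX.aemeasurable hY.aemeasurable).mp hXY,
          Measure.prod_apply hset]
        congr! 3 with y
        ext b
        simp [sub_lt_iff_lt_add']
    _ = _ := by simp_rw [Measure.map_apply hY measurableSet_Ioi]; rfl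

theorem measure_lt_sum_range_succ [IsFiniteMeasure P] {X : ℕ → Ω → ℝ}
    (hXm : ∀ i, Measurable (X i)) (hXi : iIndepFun X P) {μ : Measure ℝ}
    (hXd : ∀ i, P.map (X i) = μ) (k : ℕ) (z : ℝ) :
    P {ω | z < ∑ i ∈ Finset.range (k + 1), X i ω} =
      ∫⁻ y, P {ω | z - y < ∑ i ∈ Finset.range k, X i ω} ∂μ := by
  have hsum : IndepFun (X k) (fun ω => ∑ i ∈ Finset.range k, X i ω) P := by
    simpa only [← Finset.sum_apply] using (hXi.indepFun_sum_range_succ hXm k).symm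
  simp only [Finset.sum_range_succ, add_comm _ (X k _)]
  rw [← hXd k]
  exact measure_lt_add_eq_lintegral (hXm k) (Finset.measurable_sum _ fun i _ => hXm i) hsum z

theorem measure_lt_randomSum_eq_tsum {X : ℕ → Ω → ℝ} (hXm : ∀ i, Measurable (X i))
    {ν : Ω → ℕ} (hνm : Measurable ν) (hνX : IndepFun ν (fun ω i => X i ω) P) (z : ℝ) :
    P {ω | z < ∑ i ∈ Finset.range (ν ω), X i ω} =
      ∑' k, P {ω | ν ω = k} * P {ω | z < ∑ i ∈ Finset.range k, X i ω} := by
  have hunion : {ω | z < ∑ i ∈ Finset.range (ν ω), X i ω} =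
      ⋃ k, {ω | ν ω = k} ∩ {ω | z < ∑ i ∈ Finset.range k, X i ω} := by
    ext ω
    simp only [mem_iUnion, mem_inter_iff, mem_ofPred_eq]
    exact ⟨fun hz => ⟨ν ω, rfl, hz⟩, by rintro ⟨k, rfl, hz⟩; exact hz⟩
  rw [hunion, measure_iUnion]
  · refine tsum_congr fun k => hνX.measure_inter_preimage_eq_mul {k}
      {f : ℕ → ℝ | z < ∑ i ∈ Finset.range k, f i} (measurableSet_singleton k) ?_
    exact measurableSet_lt measurable_const
      (Finset.measurable_sum _ fun i _ => measurable_pi_apply i)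
  · intro i j hij
    exact Disjoint.mono inter_subset_left inter_subset_left
      (disjoint_left.mpr fun ω hi hj => hij (hi.symm.trans hj))
  · exact fun k => (hνm (measurableSet_singleton k)).inter
      (measurableSet_lt measurable_const (Finset.measurable_sum _ fun i _ => hXm i))

theorem measure_eq_zero_of_geometric [IsProbabilityMeasure P] {ν : Ω → ℕ} (hνm : Measurable ν)
    {p : ℝ} (hp0 : 0 < p) (hp1 : p ≤ 1)
    (hgeom : ∀ k : ℕ, 1 ≤ k → P {ω | ν ω = k} = ENNReal.ofReal (p * (1 - p) ^ (k - 1))) :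
    P {ω | ν ω = 0} = 0 := by
  have htotal : ∑' k, P {ω | ν ω = k} = 1 := by
    rw [← measure_iUnion (f := fun k => {ω | ν ω = k})
      (fun i j hij => disjoint_left.mpr fun ω hi hj => hij (hi.symm.trans hj))
      fun k => hνm (measurableSet_singleton k),
      show ⋃ k, {ω | ν ω = k} = univ from iUnion_eq_univ_iff.mpr fun ω => ⟨ν ω, rfl⟩,
      measure_univ]
  have hsucc : ∑' k, P {ω | ν ω = k + 1} = 1 := by
    simp_rw [fun k => hgeom (k + 1) (by omega), Nat.add_sub_cancel,
      ENNReal.ofReal_mul hp0.le, ENNReal.ofReal_pow (sub_nonneg.mpr hp1)]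
    have hq : 1 - ENNReal.ofReal (1 - p) = ENNReal.ofReal p := by
      rw [← ENNReal.ofReal_one, ← ENNReal.ofReal_sub _ (sub_nonneg.mpr hp1), sub_sub_cancel]
    rw [ENNReal.tsum_mul_left, ENNReal.tsum_geometric, hq,
      ENNReal.mul_inv_cancel (by simpa using hp0) ENNReal.ofReal_ne_top]
  rw [tsum_eq_zero_add' ENNReal.summable, hsucc] at htotal
  simpa using htotal

end RandomSums

theorem tsum_geometric_mul_eq_add_lintegral {μ : Measure ℝ} {g : ℕ → ℝ → ℝ≥0∞}
    (hg : ∀ k, Measurable (g k)) (hrec : ∀ k z, g (k + 1) z = ∫⁻ y, g k (z - y) ∂μ)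
    (a r : ℝ≥0∞) (z : ℝ) :
    ∑' k, a * r ^ k * g (k + 1) z =
      a * g 1 z + r * ∫⁻ y, ∑' k, a * r ^ k * g (k + 1) (z - y) ∂μ := by
  have hmeas : ∀ k, Measurable fun y => g k (z - y) := fun k =>
    (hg k).comp (measurable_const.sub measurable_id)
  rw [tsum_eq_zero_add' ENNReal.summable, pow_zero, mul_one, zero_add,
    lintegral_tsum fun k => ((hmeas (k + 1)).const_mul _).aemeasurable, ← ENNReal.tsum_mul_left]
  congr 1
  refine tsum_congr fun k => ?_
  rw [lintegral_const_mul _ (hmeas (k + 1)), ← hrec, pow_succ]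
  ring

theorem lintegral_comp_sub_le_of_antitone {μ : Measure ℝ} {G : ℝ → ℝ≥0∞} (hG : Antitone G)
    (hG1 : ∀ z, G z ≤ 1) {c : ℝ≥0∞} {x a : ℝ} (ha : a ≤ x - a)
    (hc : ∀ z ∈ Icc a (x - a), G z ≤ c * μ (Ioi z)) :
    ∫⁻ y, G (x - y) ∂μ ≤
      G (x - a) * μ (Iic a) + c * ∫⁻ y in Ioc a (x - a), μ (Ioi (x - y)) ∂μ +
        μ (Ioi (x - a)) := by
  have htail : Measurable fun y => μ (Ioi (x - y)) :=
    Monotone.measurable fun y y' hy => measure_mono (Ioi_subset_Ioi (by linarith))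
  rw [← lintegral_add_compl _ (measurableSet_Iic (a := x - a)), compl_Iic,
    ← Iic_union_Ioc_eq_Iic ha, lintegral_union measurableSet_Ioc (Iic_disjoint_Ioc le_rfl)]
  gcongr ?_ + ?_ + ?_
  · calc ∫⁻ y in Iic a, G (x - y) ∂μ ≤ ∫⁻ _ in Iic a, G (x - a) ∂μ :=
          setLIntegral_mono measurable_const fun y (hy : y ≤ a) => hG (by linarith)
      _ = G (x - a) * μ (Iic a) := setLIntegral_const _ _
  · rw [← lintegral_const_mul _ htail]
    exact setLIntegral_mono (htail.const_mul _) fun y hy =>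
      hc _ ⟨by linarith [hy.2], by linarith [hy.1]⟩
  · exact (setLIntegral_mono measurable_const fun y _ => hG1 _).trans_eq (setLIntegral_one _)

section GeometricSum

variable {Ω : Type*} [MeasurableSpace Ω] {P : Measure Ω} [IsProbabilityMeasure P]
  {μ : Measure ℝ} {X : ℕ → Ω → ℝ} {ν : Ω → ℕ} {p : ℝ}

theorem measure_lt_geometricSum_eq (hXm : ∀ i, Measurable (X i)) (hXd : ∀ i, P.map (X i) = μ)
    (hXi : iIndepFun X P) (hνm : Measurable ν) (hp0 : 0 < p) (hp1 : p ≤ 1)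
    (hgeom : ∀ k : ℕ, 1 ≤ k → P {ω | ν ω = k} = ENNReal.ofReal (p * (1 - p) ^ (k - 1)))
    (hνX : IndepFun ν (fun ω i => X i ω) P) (z : ℝ) :
    P {ω | z < ∑ i ∈ Finset.range (ν ω), X i ω} =
      ENNReal.ofReal p * μ (Ioi z) +
        ENNReal.ofReal (1 - p) * ∫⁻ y, P {ω | z - y < ∑ i ∈ Finset.range (ν ω), X i ω} ∂μ := by
  set g : ℕ → ℝ → ℝ≥0∞ := fun k z => P {ω | z < ∑ i ∈ Finset.range k, X i ω}
  have hg : ∀ k, Measurable (g k) := fun k =>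
    Antitone.measurable fun a b hab => measure_mono fun ω hω => hab.trans_lt hω
  have hseries : ∀ z, P {ω | z < ∑ i ∈ Finset.range (ν ω), X i ω} =
      ∑' k, ENNReal.ofReal p * ENNReal.ofReal (1 - p) ^ k * g (k + 1) z := by
    intro z
    rw [measure_lt_randomSum_eq_tsum hXm hνm hνX, tsum_eq_zero_add' ENNReal.summable,
      measure_eq_zero_of_geometric hνm hp0 hp1 hgeom, zero_mul, zero_add]
    refine tsum_congr fun k => ?_
    rw [hgeom (k + 1) (by omega), Nat.add_sub_cancel, ENNReal.ofReal_mul hp0.le,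
      ENNReal.ofReal_pow (sub_nonneg.mpr hp1)]
  have hg1 : g 1 z = μ (Ioi z) := by
    simp only [g, Finset.sum_range_one]
    rw [← hXd 0, Measure.map_apply (hXm 0) measurableSet_Ioi]
    rfl
  simp_rw [hseries]
  rw [tsum_geometric_mul_eq_add_lintegral hg (measure_lt_sum_range_succ hXm hXi hXd), hg1]

theorem measure_lt_geometricSum_le (hXm : ∀ i, Measurable (X i)) (hXd : ∀ i, P.map (X i) = μ)
    (hXi : iIndepFun X P) (hνm : Measurable ν) (hp0 : 0 < p) (hp1 : p ≤ 1)
    (hgeom : ∀ k : ℕ, 1 ≤ k → P {ω | ν ω = k} = ENNReal.ofReal (p * (1 - p) ^ (k - 1)))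
    (hνX : IndepFun ν (fun ω i => X i ω) P) {c : ℝ≥0∞} {a x : ℝ} (ha : a ≤ x - a)
    (hc : ∀ z ∈ Icc a (x - a),
      P {ω | z < ∑ i ∈ Finset.range (ν ω), X i ω} ≤ c * μ (Ioi z)) :
    P {ω | x < ∑ i ∈ Finset.range (ν ω), X i ω} ≤
      ENNReal.ofReal p * μ (Ioi x) + ENNReal.ofReal (1 - p) *
        (P {ω | x - a < ∑ i ∈ Finset.range (ν ω), X i ω} * μ (Iic a) +
          c * ∫⁻ y in Ioc a (x - a), μ (Ioi (x - y)) ∂μ + μ (Ioi (x - a))) := by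
  rw [measure_lt_geometricSum_eq hXm hXd hXi hνm hp0 hp1 hgeom hνX]
  gcongr
  exact lintegral_comp_sub_le_of_antitone
    (G := fun z => P {ω | z < ∑ i ∈ Finset.range (ν ω), X i ω})
    (fun a b hab => measure_mono fun ω hω => hab.trans_lt hω) (fun _ => prob_le_one) ha hc

theorem toReal_measure_lt_geometricSum_le [IsFiniteMeasure μ] (hXm : ∀ i, Measurable (X i))
    (hXd : ∀ i, P.map (X i) = μ) (hXi : iIndepFun X P) (hνm : Measurable ν) (hp0 : 0 < p)
    (hp1 : p ≤ 1)
    (hgeom : ∀ k : ℕ, 1 ≤ k → P {ω | ν ω = k} = ENNReal.ofReal (p * (1 - p) ^ (k - 1)))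
    (hνX : IndepFun ν (fun ω i => X i ω) P) {c : ℝ} (hc0 : 0 ≤ c) {a x : ℝ} (ha : a ≤ x - a)
    (hc : ∀ z ∈ Icc a (x - a),
      P {ω | z < ∑ i ∈ Finset.range (ν ω), X i ω} ≤ ENNReal.ofReal c * μ (Ioi z)) :
    (P {ω | x < ∑ i ∈ Finset.range (ν ω), X i ω}).toReal ≤
      p * tail μ x + (1 - p) *
        ((P {ω | x - a < ∑ i ∈ Finset.range (ν ω), X i ω}).toReal * (μ (Iic a)).toReal +
          c * ∫ y in Ioc a (x - a), tail μ (x - y) ∂μ + tail μ (x - a)) := by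
  have hI : ∫⁻ y in Ioc a (x - a), μ (Ioi (x - y)) ∂μ ≠ ⊤ := by
    refine ne_top_of_le_ne_top ?_
      (setLIntegral_mono measurable_const fun y _ => measure_mono (subset_univ (Ioi (x - y))))
    rw [setLIntegral_const]
    finiteness
  have hIR := integral_toReal (μ := μ.restrict (Ioc a (x - a))) (f := fun y => μ (Ioi (x - y)))
    (Monotone.measurable fun y y' hy => measure_mono (Ioi_subset_Ioi (by linarith))).aemeasurable
    (ae_of_all _ fun y => measure_lt_top μ _)
  have := ENNReal.toReal_mono (by finiteness)
    (measure_lt_geometricSum_le hXm hXd hXi hνm hp0 hp1 hgeom hνX ha hc)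
  simpa [ENNReal.toReal_add, ENNReal.toReal_mul, ENNReal.toReal_ofReal, hp0.le, hp1, hc0,
    ENNReal.mul_eq_top, hI, tail, hIR] using this

end GeometricSum

section Delta

variable {Ω : Type*} [MeasureSpace Ω] (S : Ω → ℝ) {p : ℝ} {μ : Measure ℝ}

theorem neg_one_le_Delta (hp : 0 ≤ p) (y : ℝ) : -1 ≤ Delta S p μ y := by
  have : 0 ≤ (ℙ {ω | y < S ω}).toReal / ((1 / p) * tail μ y) := by unfold tail; positivity
  unfold Delta
  linarith

theorem toReal_measure_lt_eq (hp : p ≠ 0) {y : ℝ} (hy : tail μ y ≠ 0) :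
    (ℙ {ω | y < S ω}).toReal = (Delta S p μ y + 1) * (tail μ y / p) := by
  unfold Delta
  field_simp
  ring

theorem bddAbove_Delta_image [IsProbabilityMeasure (ℙ : Measure Ω)] [IsFiniteMeasure μ]
    (hp : 0 ≤ p) {a b : ℝ} (hb : 0 < tail μ b) : BddAbove (Delta S p μ '' Icc a b) := by
  refine ⟨p / tail μ b - 1, ?_⟩
  rintro _ ⟨z, hz, rfl⟩
  have htz : tail μ b ≤ tail μ z :=
    ENNReal.toReal_mono (measure_ne_top _ _) (measure_mono (Ioi_subset_Ioi hz.2))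
  have hz0 : 0 < tail μ z := hb.trans_le htz
  have hP : (ℙ {ω | z < S ω}).toReal ≤ 1 :=
    ENNReal.toReal_le_of_le_ofReal zero_le_one (by simpa using prob_le_one)
  unfold Delta
  rw [one_div, div_eq_mul_inv, mul_inv, inv_inv, ← mul_assoc, mul_comm _ p, ← div_eq_mul_inv]
  gcongr ?_ - 1
  calc p * (ℙ {ω | z < S ω}).toReal / tail μ z ≤ p * 1 / tail μ z := by gcongr
    _ ≤ p / tail μ b := by rw [mul_one]; gcongr

theorem Delta_le_DeltaSup [IsProbabilityMeasure (ℙ : Measure Ω)] [IsFiniteMeasure μ]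
    (hp : 0 ≤ p) {a b z : ℝ} (hb : 0 < tail μ b) (hz : z ∈ Icc a b) :
    Delta S p μ z ≤ DeltaSup S p μ a b :=
  le_csSup (bddAbove_Delta_image S hp hb) ⟨z, hz, rfl⟩

theorem neg_one_le_DeltaSup [IsProbabilityMeasure (ℙ : Measure Ω)] [IsFiniteMeasure μ]
    (hp : 0 ≤ p) {a b : ℝ} (hab : a ≤ b) (hb : 0 < tail μ b) : -1 ≤ DeltaSup S p μ a b :=
  (neg_one_le_Delta S hp b).trans (Delta_le_DeltaSup S hp hb (right_mem_Icc.2 hab))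

theorem measure_lt_le_of_Delta_le [IsFiniteMeasure (ℙ : Measure Ω)] [IsFiniteMeasure μ]
    (hp : 0 < p) {z D : ℝ} (hz : 0 < tail μ z) (hD : Delta S p μ z ≤ D) :
    ℙ {ω | z < S ω} ≤ ENNReal.ofReal ((D + 1) / p) * μ (Ioi z) := by
  rw [← ENNReal.ofReal_toReal (measure_ne_top ℙ _), ← ENNReal.ofReal_toReal (measure_ne_top μ _),
    ← ENNReal.ofReal_mul' ENNReal.toReal_nonneg]
  refine ENNReal.ofReal_le_ofReal ?_
  rw [toReal_measure_lt_eq S hp.ne' hz.ne']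
  calc (Delta S p μ z + 1) * (tail μ z / p) ≤ (D + 1) * (tail μ z / p) := by gcongr
    _ = (D + 1) / p * tail μ z := by ring

end Delta

/-- Here `tail μ (x - h x) / tail μ x - 1` is `K(x, h x)` and the integral divided by
`tail μ x` is `J(x, h x)`. -/
theorem Delta_upper_bound_general {Ω : Type*} [MeasureSpace Ω]
    [IsProbabilityMeasure (ℙ : Measure Ω)]
    (μ : Measure ℝ) [IsProbabilityMeasure μ]
    (hunb : ∀ x, 0 < μ (Set.Ioi x))
    (X : ℕ → Ω → ℝ) (hXm : ∀ i, Measurable (X i))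
    (hXd : ∀ i, Measure.map (X i) ℙ = μ)
    (hXi : iIndepFun X ℙ)
    (ν : Ω → ℕ) (hνm : Measurable ν)
    (p : ℝ) (hp0 : 0 < p) (hp1 : p < 1)
    (hgeom : ∀ k : ℕ, 1 ≤ k →
      ℙ {ω | ν ω = k} = ENNReal.ofReal (p * (1 - p) ^ (k - 1)))
    (hνX : IndepFun ν (fun ω i => X i ω) ℙ)
    (h : ℝ → ℝ) (x : ℝ) (hh : h x ≤ x / 2) :
    Delta (fun ω => ∑ i ∈ Finset.range (ν ω), X i ω) p μ x ≤
      (1 - p) *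
        (Delta (fun ω => ∑ i ∈ Finset.range (ν ω), X i ω) p μ (x - h x) *
            ((tail μ (x - h x) / tail μ x - 1) + 1) * (μ (Set.Iic (h x))).toReal +
          DeltaSup (fun ω => ∑ i ∈ Finset.range (ν ω), X i ω) p μ (h x) (x - h x) *
            ((∫ y in Set.Ioc (h x) (x - h x), tail μ (x - y) ∂μ) / tail μ x)) +
      (1 - p) * ((∫ y in Set.Ioc (h x) (x - h x), tail μ (x - y) ∂μ) / tail μ x) +
      (1 - p ^ 2) * (tail μ (x - h x) / tail μ x - 1) -
      (1 - p) * ((tail μ (x - h x) / tail μ x - 1) + 1) * tail μ (h x) := by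
  set S : Ω → ℝ := fun ω => ∑ i ∈ Finset.range (ν ω), X i ω
  set D := DeltaSup S p μ (h x) (x - h x)
  have hha : h x ≤ x - h x := by linarith
  have htail : ∀ z, 0 < tail μ z := fun z => ENNReal.toReal_pos (hunb z).ne' (measure_ne_top μ _)
  have hD1 : 0 ≤ (D + 1) / p :=
    div_nonneg (by linarith [neg_one_le_DeltaSup S hp0.le hha (htail _)]) hp0.le
  have hreal := toReal_measure_lt_geometricSum_le hXm hXd hXi hνm hp0 hp1.le hgeom hνX hD1 hha
    fun z hz =>
      measure_lt_le_of_Delta_le S hp0 (htail z) (Delta_le_DeltaSup S hp0.le (htail _) hz)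
  have hF : (μ (Iic (h x))).toReal = 1 - tail μ (h x) := by
    simpa [tail, measureReal_def] using
      probReal_compl_eq_one_sub (μ := μ) (measurableSet_Ioi (a := h x))
  rw [toReal_measure_lt_eq S hp0.ne' (htail (x - h x)).ne', hF] at hreal
  rw [hF]
  calc Delta S p μ x = (ℙ {ω | x < S ω}).toReal / ((1 / p) * tail μ x) - 1 := rfl
    _ ≤ (p * tail μ x + (1 - p) * ((Delta S p μ (x - h x) + 1) * (tail μ (x - h x) / p) *
          (1 - tail μ (h x)) + (D + 1) / p * ∫ y in Ioc (h x) (x - h x), tail μ (x - y) ∂μ +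
          tail μ (x - h x))) / ((1 / p) * tail μ x) - 1 := by
      have := htail x
      gcongr
    _ = _ := by
      have := (htail x).ne'
      field_simp
      ring

/-- Upper bound for the relative accuracy Δ(x), with J = J(x,h(x)) and
K = K(x,h(x)). -/
theorem Delta_upper_bound {Ω : Type*} [MeasureSpace Ω]
    [IsProbabilityMeasure (ℙ : Measure Ω)]
    (μ : Measure ℝ) [IsProbabilityMeasure μ]
    (hsupp : μ (Set.Iio 0) = 0) (hunb : ∀ x, 0 < μ (Set.Ioi x))
    (X : ℕ → Ω → ℝ) (hXm : ∀ i, Measurable (X i))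
    (hXd : ∀ i, Measure.map (X i) ℙ = μ)
    (hXi : iIndepFun X ℙ)
    (ν : Ω → ℕ) (hνm : Measurable ν)
    (p : ℝ) (hp0 : 0 < p) (hp1 : p < 1)
    (hgeom : ∀ k : ℕ, 1 ≤ k →
      ℙ {ω | ν ω = k} = ENNReal.ofReal (p * (1 - p) ^ (k - 1)))
    (hνX : IndepFun ν (fun ω i => X i ω) ℙ)
    (h : ℝ → ℝ) (x : ℝ) (hh0 : 0 ≤ h x) (hh : h x ≤ x / 2) :
    Delta (fun ω => ∑ i ∈ Finset.range (ν ω), X i ω) p μ x ≤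
      (1 - p) *
        (Delta (fun ω => ∑ i ∈ Finset.range (ν ω), X i ω) p μ (x - h x) *
            ((tail μ (x - h x) / tail μ x - 1) + 1) * (μ (Set.Iic (h x))).toReal +
          DeltaSup (fun ω => ∑ i ∈ Finset.range (ν ω), X i ω) p μ (h x) (x - h x) *
            ((∫ y in Set.Ioc (h x) (x - h x), tail μ (x - y) ∂μ) / tail μ x)) +
      (1 - p) * ((∫ y in Set.Ioc (h x) (x - h x), tail μ (x - y) ∂μ) / tail μ x) +
      (1 - p ^ 2) * (tail μ (x - h x) / tail μ x - 1) -
      (1 - p) * ((tail μ (x - h x) / tail μ x - 1) + 1) * tail μ (h x) :=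
  Delta_upper_bound_general μ hunb X hXm hXd hXi ν hνm p hp0 hp1 hgeom hνX h x hh
end

section
/- Let F be the Pareto distribution with F̄(x) = x^{-α} for x ≥ 1, α > 1, and let 1 ≤ h(x) ≤ x/4. Then J(x,h(x)) = ∫_{h(x)}^{x−h(x)} F̄(x−y)/F̄(x) dF(y) ≤ 2(2/h(x))^α + (4/x)^α. -/
/-!
Split `(h, x - h]` at `x / 2`. On a piece `(a, b]` with `b ≤ x - c`, the ratio
`F̄(x - y) / F̄(x)` is at most `(x / c)^α` and the `F`-mass is at most `F̄(a) = a^{-α}`, so the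
piece contributes at most `(x / (a c))^α`. For both halves `{a, c} = {h, x / 2}`, giving
`(2 / h)^α` each.
-/

open Filter Set MeasureTheory

/-- The tail of the Pareto(α,1) distribution. -/
noncomputable def paretoTail (α : ℝ) (x : ℝ) : ℝ := if x < 1 then 1 else x ^ (-α)

/-- The Pareto(α,1) measure, with density α y^{-(α+1)} on [1,∞). -/
noncomputable def paretoMeasure (α : ℝ) : Measure ℝ :=
  volume.withDensity (fun y => ENNReal.ofReal (if 1 ≤ y then α * y ^ (-(α + 1)) else 0))

section Pareto

variable {α : ℝ}

lemma paretoTail_of_one_le {x : ℝ} (hx : 1 ≤ x) : paretoTail α x = x ^ (-α) := by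
  simp [paretoTail, not_lt.mpr hx]

lemma paretoTail_nonneg (x : ℝ) : 0 ≤ paretoTail α x := by
  unfold paretoTail
  split_ifs with hx
  · exact zero_le_one
  · exact Real.rpow_nonneg (by linarith [not_lt.mp hx]) _

lemma paretoTail_le_one (hα : 0 ≤ α) (x : ℝ) : paretoTail α x ≤ 1 := by
  unfold paretoTail
  split_ifs with hx
  · exact le_rfl
  · exact Real.rpow_le_one_of_one_le_of_nonpos (not_lt.mp hx) (neg_nonpos.mpr hα)

lemma measurable_paretoTail (α : ℝ) : Measurable (paretoTail α) :=
  Measurable.ite measurableSet_Iio measurable_const (by fun_prop)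

lemma paretoTail_div_le_rpow (hα : 0 ≤ α) {c u x : ℝ} (hc : 1 ≤ c) (hcu : c ≤ u) (hx : 1 ≤ x) :
    paretoTail α u / paretoTail α x ≤ (x / c) ^ α := by
  have hc0 : 0 < c := by linarith
  have hx0 : 0 < x := by linarith
  rw [paretoTail_of_one_le (hc.trans hcu), paretoTail_of_one_le hx, Real.rpow_neg (by linarith),
    Real.rpow_neg hx0.le, inv_div_inv, ← Real.div_rpow hx0.le (by linarith)]
  exact Real.rpow_le_rpow (div_nonneg hx0.le (by linarith)) (by gcongr) hα

lemma integrableOn_Ioi_paretoDensity (hα : 0 < α) {a : ℝ} (ha : 0 < a) :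
    IntegrableOn (fun y : ℝ => α * y ^ (-(α + 1))) (Ioi a) :=
  (integrableOn_Ioi_rpow_of_lt (by linarith) ha).const_mul α

lemma isFiniteMeasure_paretoMeasure (hα : 0 < α) : IsFiniteMeasure (paretoMeasure α) := by
  refine isFiniteMeasure_withDensity_ofReal (Integrable.hasFiniteIntegral ?_)
  have hOn : IntegrableOn (fun y : ℝ => α * y ^ (-(α + 1))) (Ici 1) :=
    (integrableOn_Ici_iff_integrableOn_Ioi).mpr (integrableOn_Ioi_paretoDensity hα one_pos)
  have hind : (fun y : ℝ => if 1 ≤ y then α * y ^ (-(α + 1)) else 0) =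
      (Ici 1).indicator fun y => α * y ^ (-(α + 1)) := by
    ext y
    simp [indicator_apply]
  rw [hind]
  exact (integrable_indicator_iff measurableSet_Ici).mpr hOn

lemma paretoMeasure_Ioi (hα : 0 < α) {a : ℝ} (ha : 1 ≤ a) :
    paretoMeasure α (Ioi a) = ENNReal.ofReal (a ^ (-α)) := by
  have ha0 : 0 < a := by linarith
  rw [paretoMeasure, withDensity_apply _ measurableSet_Ioi,
    setLIntegral_congr_fun measurableSet_Ioi (g := fun y => ENNReal.ofReal (α * y ^ (-(α + 1))))
      (fun y hy => by simp only [if_pos (ha.trans (le_of_lt hy))]),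
    ← ofReal_integral_eq_lintegral_ofReal (integrableOn_Ioi_paretoDensity hα ha0)]
  · rw [integral_const_mul, integral_Ioi_rpow_of_lt (by linarith) ha0]
    congr 1
    rw [show -(α + 1) + 1 = -α by ring]
    field_simp
  · filter_upwards [ae_restrict_mem measurableSet_Ioi] with y hy
    have : 0 < y := ha0.trans hy
    positivity

lemma setIntegral_Ioc_paretoMeasure_le (hα : 0 < α) {a b C : ℝ} (ha : 1 ≤ a) (hC0 : 0 ≤ C)
    {f : ℝ → ℝ} (hC : ∀ y ∈ Ioc a b, ‖f y‖ ≤ C) :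
    ∫ y in Ioc a b, f y ∂paretoMeasure α ≤ C * a ^ (-α) := by
  have hμ : paretoMeasure α (Ioc a b) ≤ ENNReal.ofReal (a ^ (-α)) :=
    paretoMeasure_Ioi hα ha ▸ measure_mono Ioc_subset_Ioi_self
  calc ∫ y in Ioc a b, f y ∂paretoMeasure α
      ≤ C * (paretoMeasure α).real (Ioc a b) :=
        (Real.le_norm_self _).trans
          (norm_setIntegral_le_of_norm_le_const (hμ.trans_lt ENNReal.ofReal_lt_top) hC)
    _ ≤ C * a ^ (-α) := by
        gcongr
        exact ENNReal.toReal_le_of_le_ofReal (by positivity) hμ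

lemma integrable_paretoTail_sub_div (hα : 0 ≤ α) (μ : Measure ℝ) [IsFiniteMeasure μ] (x : ℝ) :
    Integrable (fun y => paretoTail α (x - y) / paretoTail α x) μ :=
  Integrable.of_mem_Icc 0 (1 / paretoTail α x)
    (((measurable_paretoTail α).comp (measurable_const.sub measurable_id)).div_const _).aemeasurable
    (ae_of_all _ fun _ => ⟨div_nonneg (paretoTail_nonneg _) (paretoTail_nonneg _),
      div_le_div_of_nonneg_right (paretoTail_le_one hα _) (paretoTail_nonneg _)⟩)

lemma setIntegral_Ioc_paretoTail_sub_div_le (hα : 0 < α) {a b c x : ℝ} (ha : 1 ≤ a) (hc : 1 ≤ c)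
    (hbc : b ≤ x - c) (hx : 1 ≤ x) :
    ∫ y in Ioc a b, paretoTail α (x - y) / paretoTail α x ∂paretoMeasure α ≤ (x / (a * c)) ^ α := by
  calc ∫ y in Ioc a b, paretoTail α (x - y) / paretoTail α x ∂paretoMeasure α
      ≤ (x / c) ^ α * a ^ (-α) :=
        setIntegral_Ioc_paretoMeasure_le hα ha (by positivity) fun y hy => by
          rw [Real.norm_of_nonneg (div_nonneg (paretoTail_nonneg _) (paretoTail_nonneg _))]
          exact paretoTail_div_le_rpow hα.le hc (by linarith [hy.2]) hx
    _ = (x / (a * c)) ^ α := by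
        have ha0 : 0 < a := by linarith
        have hc0 : 0 < c := by linarith
        rw [Real.rpow_neg ha0.le, ← Real.inv_rpow ha0.le,
          ← Real.mul_rpow (div_nonneg (by linarith) hc0.le) (inv_nonneg.mpr ha0.le)]
        congr 1
        field_simp

end Pareto

/-- For the Pareto distribution with 1 ≤ h(x) ≤ x/4:
J(x,h(x)) = ∫_{h(x)}^{x−h(x)} F̄(x−y)/F̄(x) dF(y) ≤ 2(2/h(x))^α + (4/x)^α. -/
theorem pareto_J_bound (α : ℝ) (hα : 1 < α) (h : ℝ → ℝ) :
    ∀ x : ℝ, 1 ≤ h x → h x ≤ x / 4 →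
      (∫ y in Set.Ioc (h x) (x - h x),
          paretoTail α (x - y) / paretoTail α x ∂(paretoMeasure α)) ≤
        2 * (2 / h x) ^ α + (4 / x) ^ α := by
  intro x h1 h4
  have hα0 : 0 < α := by linarith
  have hx0 : 0 < x := by linarith
  have := isFiniteMeasure_paretoMeasure hα0
  have hf := integrable_paretoTail_sub_div hα0.le (paretoMeasure α) x
  rw [← Ioc_union_Ioc_eq_Ioc (b := x / 2) (by linarith) (by linarith),
    setIntegral_union (Ioc_disjoint_Ioc_of_le le_rfl) measurableSet_Ioc hf.integrableOn
      hf.integrableOn]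
  have near := setIntegral_Ioc_paretoTail_sub_div_le hα0 (b := x / 2) (c := x / 2) (x := x) h1
    (by linarith) (by linarith) (by linarith)
  have far := setIntegral_Ioc_paretoTail_sub_div_le hα0 (a := x / 2) (b := x - h x) (x := x)
    (by linarith) h1 le_rfl (by linarith)
  have hprod : x / (h x * (x / 2)) = 2 / h x := by field_simp
  rw [hprod] at near
  rw [mul_comm, hprod] at far
  linarith [Real.rpow_nonneg (by positivity : (0 : ℝ) ≤ 4 / x) α]
end
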